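/- For every x ∈ (0,1) and every u > 0, L(x,u) > 0, where L(x,u) = K(x,u) − K(−x,u) with K(x,u) = (4x²u² − u² − 2xu)/(u² − 2xu + 1) + (1 − 2x²)log(u² − 2xu + 1) + 4x√(1−x²)(arctan((u−x)/√(1−x²)) + arctan(x/√(1−x²))). -/

import Mathlib

/-
`L x 0 = 0`, and differentiating `K` gives
`∂ₜ L x t = 4 x t² Q(t²) / ((t² - 2xt + 1)² (t² + 2xt + 1)²)` with
`Q(w) = (5 - 8x²) w² + (6 - 4x²) w + 1`. Since `Q(0) = 1` and `6 - 4x² > 0`, `Q` changes sign at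
most once on `(0, ∞)`, from `+` to `-`. So `L x` increases and then possibly decreases; in the first
regime `L x u > L x 0 = 0`, and in the second `L x u` dominates the limit at infinity, where the
rational and logarithmic parts vanish and each arctangent tends to `π / 2`, leaving
`4π x √(1 - x²) > 0`.
-/

noncomputable def K (x u : ℝ) : ℝ :=
  (4*x^2*u^2 - u^2 - 2*x*u) / (u^2 - 2*x*u + 1)
    + (1 - 2*x^2) * Real.log (u^2 - 2*x*u + 1)
    + 4*x*Real.sqrt (1 - x^2) *
        (Real.arctan ((u - x) / Real.sqrt (1 - x^2))
          + Real.arctan (x / Real.sqrt (1 - x^2)))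

noncomputable def L (x u : ℝ) : ℝ := K x u - K (-x) u

open Real Filter Topology Set

lemma sq_sub_two_mul_mul_add_one_pos {x : ℝ} (hx : x ^ 2 < 1) (u : ℝ) :
    0 < u ^ 2 - 2 * x * u + 1 := by
  nlinarith [sq_nonneg (u - x)]

lemma tendsto_quadratic_div_quadratic_atTop (a b c d e : ℝ) :
    Tendsto (fun u => (a * u ^ 2 + b * u + c) / (u ^ 2 + d * u + e)) atTop (𝓝 a) := by
  have h0 : Tendsto (fun w => (a + b * w + c * w ^ 2) / (1 + d * w + e * w ^ 2)) (𝓝 0) (𝓝 a) := by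
    have : ContinuousAt (fun w => (a + b * w + c * w ^ 2) / (1 + d * w + e * w ^ 2)) 0 :=
      ContinuousAt.div (by fun_prop) (by fun_prop) (by simp)
    simpa using this.tendsto
  refine (h0.comp tendsto_inv_atTop_zero).congr' ?_
  filter_upwards [eventually_gt_atTop 0] with u hu
  calc (a + b * u⁻¹ + c * u⁻¹ ^ 2) / (1 + d * u⁻¹ + e * u⁻¹ ^ 2)
      _ = ((a * u ^ 2 + b * u + c) * (u ^ 2)⁻¹) / ((u ^ 2 + d * u + e) * (u ^ 2)⁻¹) := by
        congr 1 <;> field_simp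
      _ = _ := mul_div_mul_right _ _ (by positivity)

lemma hasDerivAt_K {x : ℝ} (hx : x ^ 2 < 1) (u : ℝ) :
    HasDerivAt (K x) (2 * u ^ 2 * ((1 - 2 * x ^ 2) * u + x) / (u ^ 2 - 2 * x * u + 1) ^ 2) u := by
  set s := √(1 - x ^ 2)
  have hs : s ^ 2 = 1 - x ^ 2 := sq_sqrt (by linarith)
  have hs0 : s ≠ 0 := (sqrt_pos.2 (by linarith)).ne'
  have hD := sq_sub_two_mul_mul_add_one_pos hx u
  have hq : HasDerivAt (fun u => u ^ 2 - 2 * x * u + 1) (2 * u - 2 * x) u :=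
    (((hasDerivAt_pow 2 u).sub ((hasDerivAt_id' u).const_mul (2 * x))).add_const 1).congr_deriv
      (by simp)
  have hn : HasDerivAt (fun u => 4 * x ^ 2 * u ^ 2 - u ^ 2 - 2 * x * u)
      (8 * x ^ 2 * u - 2 * u - 2 * x) u :=
    ((((hasDerivAt_pow 2 u).const_mul (4 * x ^ 2)).sub (hasDerivAt_pow 2 u)).sub
      ((hasDerivAt_id' u).const_mul (2 * x))).congr_deriv (by simp; ring)
  have ha := ((((hasDerivAt_id' u).sub_const x).div_const s).arctan.add_const
    (arctan (x / s))).const_mul (4 * x * s)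
  refine (((hn.div hq hD.ne').add ((hq.log hD.ne').const_mul (1 - 2 * x ^ 2))).add ha).congr_deriv ?_
  have harc : 1 + ((u - x) / s) ^ 2 = (u ^ 2 - 2 * x * u + 1) / s ^ 2 := by
    field_simp
    linear_combination hs
  rw [harc, hs]
  field_simp
  ring

lemma hasDerivAt_L {x : ℝ} (hx : x ^ 2 < 1) (t : ℝ) :
    HasDerivAt (L x) (4 * x * t ^ 2 * ((5 - 8 * x ^ 2) * (t ^ 2) ^ 2 + (6 - 4 * x ^ 2) * t ^ 2 + 1)
      / ((t ^ 2 - 2 * x * t + 1) ^ 2 * (t ^ 2 + 2 * x * t + 1) ^ 2)) t := by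
  have hx' : (-x) ^ 2 < 1 := by rwa [neg_sq]
  have hDm := sq_sub_two_mul_mul_add_one_pos hx t
  have hDp := sq_sub_two_mul_mul_add_one_pos hx' t
  refine ((hasDerivAt_K hx t).sub (hasDerivAt_K hx' t)).congr_deriv ?_
  rw [div_sub_div _ _ (by positivity) (by positivity)]
  congr 1 <;> ring

lemma L_zero (x : ℝ) : L x 0 = 0 := by
  simp [L, K, neg_div, arctan_neg]

lemma L_eq {x : ℝ} (hx : x ^ 2 < 1) (u : ℝ) :
    L x u = (4 * x ^ 2 * u ^ 2 - u ^ 2 - 2 * x * u) / (u ^ 2 - 2 * x * u + 1)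
      - (4 * x ^ 2 * u ^ 2 - u ^ 2 + 2 * x * u) / (u ^ 2 + 2 * x * u + 1)
      + (1 - 2 * x ^ 2) * log ((u ^ 2 - 2 * x * u + 1) / (u ^ 2 + 2 * x * u + 1))
      + 4 * x * √(1 - x ^ 2) * (arctan ((u - x) / √(1 - x ^ 2)) + arctan ((u + x) / √(1 - x ^ 2))) := by
  have hDm := sq_sub_two_mul_mul_add_one_pos hx u
  have hDp : 0 < u ^ 2 + 2 * x * u + 1 := by nlinarith [sq_nonneg (u + x)]
  rw [L, K, K, neg_sq, log_div hDm.ne' hDp.ne', neg_div, arctan_neg]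
  ring_nf

lemma tendsto_L_atTop {x : ℝ} (hx : x ^ 2 < 1) :
    Tendsto (L x) atTop (𝓝 (4 * π * x * √(1 - x ^ 2))) := by
  have hs0 : 0 < √(1 - x ^ 2) := sqrt_pos.2 (by linarith)
  have hrat (y : ℝ) : Tendsto (fun u => (4 * x ^ 2 * u ^ 2 - u ^ 2 + y * u) / (u ^ 2 + y * u + 1))
      atTop (𝓝 (4 * x ^ 2 - 1)) :=
    (tendsto_quadratic_div_quadratic_atTop (4 * x ^ 2 - 1) y 0 y 1).congr fun u => by ring
  have hlog : Tendsto (fun u => log ((u ^ 2 - 2 * x * u + 1) / (u ^ 2 + 2 * x * u + 1))) atTop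
      (𝓝 0) := by
    simpa using ((tendsto_quadratic_div_quadratic_atTop 1 (-2 * x) 1 (2 * x) 1).congr
      fun u => by ring).log one_ne_zero
  have harctan (y : ℝ) : Tendsto (fun u => arctan ((u + y) / √(1 - x ^ 2))) atTop (𝓝 (π / 2)) :=
    tendsto_nhds_of_tendsto_nhdsWithin <| tendsto_arctan_atTop.comp <|
      (tendsto_atTop_add_const_right _ y tendsto_id).atTop_div_const hs0
  have h := (((hrat (-2 * x)).sub (hrat (2 * x))).add (hlog.const_mul (1 - 2 * x ^ 2))).add
    (((harctan (-x)).add (harctan x)).const_mul (4 * x * √(1 - x ^ 2)))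
  convert h.congr (f₂ := L x) fun u => by rw [L_eq hx u, sub_eq_add_neg u x]; ring using 2
  ring

lemma quadratic_neg_of_nonpos_of_lt {a b c w₁ w₂ : ℝ} (hb : 0 ≤ b) (hc : 0 < c) (hw₁ : 0 < w₁)
    (hw : w₁ < w₂) (h : a * w₁ ^ 2 + b * w₁ + c ≤ 0) : a * w₂ ^ 2 + b * w₂ + c < 0 := by
  have h₁ : a * w₁ + b < 0 := by nlinarith
  have h₂ : a * w₂ + b < a * w₁ + b := by nlinarith
  nlinarith [mul_lt_mul_of_pos_left h₂ hw₁, mul_neg_of_pos_of_neg (sub_pos.2 hw) (h₂.trans h₁)]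

lemma L_pos_of_forall_quartic_pos {x u : ℝ} (hx0 : 0 < x) (hx : x ^ 2 < 1) (hu : 0 < u)
    (hQ : ∀ t ∈ Ioo 0 u, 0 < (5 - 8 * x ^ 2) * (t ^ 2) ^ 2 + (6 - 4 * x ^ 2) * t ^ 2 + 1) :
    0 < L x u := by
  have hmono : StrictMonoOn (L x) (Icc 0 u) := by
    refine strictMonoOn_of_hasDerivWithinAt_pos (convex_Icc 0 u)
      (fun t _ => (hasDerivAt_L hx t).continuousAt.continuousWithinAt)
      (fun t _ => (hasDerivAt_L hx t).hasDerivWithinAt) fun t ht => ?_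
    rw [interior_Icc] at ht
    have hDm := sq_sub_two_mul_mul_add_one_pos hx t
    have hDp : 0 < t ^ 2 + 2 * x * t + 1 := by nlinarith [sq_nonneg (t + x)]
    exact div_pos (mul_pos (mul_pos (by positivity) (pow_pos ht.1 2)) (hQ t ht)) (by positivity)
  simpa [L_zero] using hmono (left_mem_Icc.2 hu.le) (right_mem_Icc.2 hu.le) hu

lemma le_L_of_forall_quartic_nonpos {x u : ℝ} (hx0 : 0 ≤ x) (hx : x ^ 2 < 1)
    (hQ : ∀ t ∈ Ioi u, (5 - 8 * x ^ 2) * (t ^ 2) ^ 2 + (6 - 4 * x ^ 2) * t ^ 2 + 1 ≤ 0) :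
    4 * π * x * √(1 - x ^ 2) ≤ L x u := by
  have hanti : AntitoneOn (L x) (Ici u) := by
    refine antitoneOn_of_hasDerivWithinAt_nonpos (convex_Ici u)
      (fun t _ => (hasDerivAt_L hx t).continuousAt.continuousWithinAt)
      (fun t _ => (hasDerivAt_L hx t).hasDerivWithinAt) fun t ht => ?_
    rw [interior_Ici] at ht
    exact div_nonpos_of_nonpos_of_nonneg (mul_nonpos_of_nonneg_of_nonpos (by positivity) (hQ t ht))
      (by positivity)
  exact le_of_tendsto (tendsto_L_atTop hx)
    (eventually_atTop.2 ⟨u, fun v hv => hanti self_mem_Ici hv hv⟩)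

theorem stmt_9 (x : ℝ) (hx : x ∈ Set.Ioo (0:ℝ) 1) (u : ℝ) (hu : 0 < u) :
    0 < L x u := by
  obtain ⟨hx0, hx1⟩ := hx
  have hx2 : x ^ 2 < 1 := by nlinarith
  have hb : 0 ≤ 6 - 4 * x ^ 2 := by linarith
  by_cases hQ : 0 < (5 - 8 * x ^ 2) * (u ^ 2) ^ 2 + (6 - 4 * x ^ 2) * u ^ 2 + 1
  · refine L_pos_of_forall_quartic_pos hx0 hx2 hu fun t ht => lt_of_not_ge fun h => ?_
    exact lt_asymm hQ (quadratic_neg_of_nonpos_of_lt hb one_pos (pow_pos ht.1 2)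
      (pow_lt_pow_left₀ ht.2 ht.1.le two_ne_zero) h)
  · have hs : 0 < √(1 - x ^ 2) := sqrt_pos.2 (by linarith)
    refine lt_of_lt_of_le (by positivity) (le_L_of_forall_quartic_nonpos hx0.le hx2 fun t ht => ?_)
    exact (quadratic_neg_of_nonpos_of_lt hb one_pos (pow_pos hu 2)
      (pow_lt_pow_left₀ ht hu.le two_ne_zero) (not_lt.1 hQ)).le
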